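/- For the unit ball B_1 ⊂ ℝ^N, s ∈ (0,1/2), and 0 < t < 1, the directional derivative of V_{B_1} along e_1 at the point t e_1 is strictly positive; equivalently, ∫_{B_1^c} (y_1 − t) |y − t e_1|^{−(N+2s+2)} dy > 0. -/

import Mathlib

open MeasureTheory Metric Set

noncomputable section BallPotAux

namespace BallPotAux

variable (N : ℕ)

abbrev E (N : ℕ) := EuclideanSpace ℝ (Fin (N+2))

/-- negation of the first coordinate, as a linear isometry equiv -/
def L : E N ≃ₗᵢ[ℝ] E N :=
  LinearIsometryEquiv.piLpCongrRight 2
    (fun i : Fin (N+2) =>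
      if i = 0 then LinearIsometryEquiv.neg ℝ else LinearIsometryEquiv.refl ℝ ℝ)

lemma L_apply (x : E N) (i : Fin (N+2)) :
    L N x i = if i = 0 then -(x i) else x i := by
  simp only [L, LinearIsometryEquiv.piLpCongrRight_apply, PiLp.toLp_apply]
  split_ifs <;> simp

lemma L_single (a : ℝ) :
    L N (EuclideanSpace.single (0 : Fin (N+2)) a)
      = -(EuclideanSpace.single (0 : Fin (N+2)) a) := by
  ext i
  rw [PiLp.neg_apply, L_apply]
  by_cases h : i = 0
  · simp [h, EuclideanSpace.single_apply]
  · simp [h, EuclideanSpace.single_apply]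

lemma L_invol (x : E N) : L N (L N x) = x := by
  ext i
  simp only [L_apply]
  split_ifs <;> simp

lemma coord_le_norm (x : E N) (i : Fin (N+2)) : |x i| ≤ ‖x‖ := by
  rw [EuclideanSpace.norm_eq]
  calc |x i| = Real.sqrt ((x i)^2) := (Real.sqrt_sq_eq_abs _).symm
    _ ≤ Real.sqrt (∑ j, ‖x j‖^2) := by
        apply Real.sqrt_le_sqrt
        have : (x i)^2 = ‖x i‖^2 := by simp [Real.norm_eq_abs, sq_abs]
        rw [this]
        exact Finset.single_le_sum (f := fun j => ‖x j‖^2)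
          (fun j _ => by positivity) (Finset.mem_univ i)

lemma norm_sq_eq (x : E N) : ‖x‖^2 = ∑ j, (x j)^2 := by
  rw [EuclideanSpace.norm_eq, Real.sq_sqrt (by positivity)]
  simp [Real.norm_eq_abs, sq_abs]

end BallPotAux

end BallPotAux

open BallPotAux

set_option maxHeartbeats 2000000 in
/-- for the unit ball `B_1 ⊂ ℝ^N` (`N ≥ 2`, realized as dimension `N+2`),
`s ∈ (0,1/2)` and `0 < t < 1`, the directional derivative of `V_{B_1}` along `e_1`
at `t e_1` is strictly positive; equivalently
`∫_{B_1ᶜ} (y_1 - t) |y - t e_1|^{-(N+2s+2)} dy > 0`. -/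
theorem ballPotential_radial_derivative_pos
    (N : ℕ) (s t : ℝ) (hs : 0 < s) (hs' : s < 1/2) (ht : 0 < t) (ht' : t < 1) :
    0 < ∫ y in (Metric.ball (0 : EuclideanSpace ℝ (Fin (N+2))) 1)ᶜ,
        (y 0 - t) * ‖y - t • EuclideanSpace.single (0 : Fin (N+2)) (1:ℝ)‖ ^
          (-((N + 2 : ℝ) + 2*s + 2)) := by
  set c : E N := t • EuclideanSpace.single (0 : Fin (N+2)) (1:ℝ) with hcdef
  set p : ℝ := (N + 2 : ℝ) + 2*s + 2 with hpdef
  set f : E N → ℝ := fun y => (y 0 - t) * ‖y - c‖ ^ (-p) with hfdef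
  set A : Set (E N) := (Metric.ball (0 : E N) 1)ᶜ with hAdef
  show 0 < ∫ y in A, f y
  have hc0 : c 0 = t := by
    simp [hcdef, EuclideanSpace.single_apply]
  have hci : ∀ i : Fin (N+2), i ≠ 0 → c i = 0 := by
    intro i hi
    simp [hcdef, EuclideanSpace.single_apply, hi]
  have hnc : ‖c‖ = t := by
    rw [hcdef, norm_smul, EuclideanSpace.norm_single]
    simp [abs_of_pos ht]
  -- the reflection
  set T : E N → E N := fun y => c + L N (y - c) with hTdef
  have hT0 : ∀ y : E N, T y 0 = 2*t - y 0 := by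
    intro y
    have hL : (L N) (y - c) 0 = -((y - c) 0) := by
      rw [BallPotAux.L_apply]; simp
    simp only [hTdef, PiLp.add_apply, hL, PiLp.sub_apply, hc0]
    ring
  have hTi : ∀ (y : E N) (i : Fin (N+2)), i ≠ 0 → T y i = y i := by
    intro y i hi
    have hL : (L N) (y - c) i = (y - c) i := by
      rw [BallPotAux.L_apply, if_neg hi]
    simp only [hTdef, PiLp.add_apply, hL, PiLp.sub_apply, hci i hi]
    ring
  have hTc : ∀ y : E N, ‖T y - c‖ = ‖y - c‖ := by
    intro y
    simp only [hTdef, add_sub_cancel_left]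
    exact (L N).norm_map _
  have hfT : ∀ y : E N, f (T y) = -f y := by
    intro y
    simp only [hfdef, hTc, hT0]
    ring
  have hTsq : ∀ y : E N, ‖T y‖^2 = ‖y‖^2 - 4*t*(y 0 - t) := by
    intro y
    have h1 : ‖T y‖^2 - ‖y‖^2 = ∑ j, ((T y j)^2 - (y j)^2) := by
      rw [norm_sq_eq, norm_sq_eq, Finset.sum_sub_distrib]
    have h2 : ∑ j, ((T y j)^2 - (y j)^2) = (T y 0)^2 - (y 0)^2 := by
      apply Finset.sum_eq_single
      · intro i _ hi
        rw [hTi y i hi]; ring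
      · intro h; exact absurd (Finset.mem_univ _) h
    have := h1.trans h2
    rw [hT0] at this
    nlinarith [this]
  have hTmp : MeasurePreserving T volume volume := by
    have := (measurePreserving_add_left (volume : Measure (E N)) c).comp
      ((L N).measurePreserving.comp (measurePreserving_sub_right volume c))
    exact this
  have hTcont : Continuous T := by
    apply Continuous.add continuous_const
    exact (L N).continuous.comp (continuous_id.sub continuous_const)
  have hTemb : MeasurableEmbedding T := by
    have hinv : Function.Involutive T := by
      intro y
      simp only [hTdef, add_sub_cancel_left, L_invol, add_sub_cancel]
    exact MeasurableEquiv.measurableEmbedding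
      { toEquiv := hinv.toPerm T
        measurable_toFun := hTmp.measurable
        measurable_invFun := hTmp.measurable }
  have hA : MeasurableSet A := measurableSet_ball.compl
  have hmemA : ∀ y : E N, y ∈ A ↔ 1 ≤ ‖y‖ := by
    intro y; simp [hAdef, Metric.mem_ball, dist_zero_right, not_lt]
  have hcont0 : Continuous (fun y : E N => y 0) := by
    exact (EuclideanSpace.proj (0 : Fin (N+2)) : E N →L[ℝ] ℝ).continuous
  have hfm : Measurable f := by
    apply Measurable.mul
    · exact (hcont0.measurable).sub measurable_const
    · fun_prop
  set q : ℝ := p - 1 with hqdef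
  have hNnn : (0:ℝ) ≤ (N:ℝ) := Nat.cast_nonneg N
  have hq0 : 0 < q := by rw [hqdef, hpdef]; linarith
  have hqrank : (Module.finrank ℝ (E N) : ℝ) < q := by
    rw [finrank_euclideanSpace_fin, hqdef, hpdef]
    push_cast; linarith
  have hInt : IntegrableOn f A volume := by
    have hbase : Integrable (fun y : E N => ((1-t)/2) ^ (-q) * (1 + ‖y‖) ^ (-q)) volume :=
      (integrable_one_add_norm hqrank).const_mul _
    refine Integrable.mono' hbase.integrableOn (hfm.aestronglyMeasurable.restrict) ?_
    rw [ae_restrict_iff' hA]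
    refine ae_of_all _ ?_
    intro y hy
    have h1 : (1:ℝ) ≤ ‖y‖ := (hmemA y).1 hy
    have h2 : (1 - t) ≤ ‖y - c‖ := by
      have h := norm_sub_norm_le y c
      rw [hnc] at h; linarith
    have h2' : 0 < ‖y - c‖ := by linarith
    have h3 : |y 0 - t| ≤ ‖y - c‖ := by
      have h := coord_le_norm N (y - c) 0
      rwa [PiLp.sub_apply, hc0] at h
    have h2a : ‖y‖ - t ≤ ‖y - c‖ := by
      have h := norm_sub_norm_le y c
      rw [hnc] at h; linarith
    have h4 : ((1-t)/2) * (1 + ‖y‖) ≤ ‖y - c‖ := by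
      nlinarith [mul_nonneg (sub_nonneg.2 h1) (by linarith : (0:ℝ) ≤ 1 + t)]
    have h5 : 0 < ((1-t)/2) * (1 + ‖y‖) := by nlinarith
    have h6 : ‖y - c‖ ^ (-q) ≤ (((1-t)/2) * (1 + ‖y‖)) ^ (-q) :=
      Real.rpow_le_rpow_of_nonpos h5 h4 (by linarith)
    have h7 : ‖f y‖ ≤ ‖y - c‖ ^ (-q) := by
      have e : -q = 1 + (-p) := by rw [hqdef]; ring
      rw [hfdef]
      simp only [Real.norm_eq_abs]
      rw [abs_mul, abs_of_nonneg (Real.rpow_nonneg (norm_nonneg _) _)]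
      rw [e, Real.rpow_add h2', Real.rpow_one]
      exact mul_le_mul_of_nonneg_right h3 (Real.rpow_nonneg (norm_nonneg _) _)
    calc ‖f y‖ ≤ ‖y - c‖ ^ (-q) := h7
      _ ≤ (((1-t)/2) * (1 + ‖y‖)) ^ (-q) := h6
      _ = ((1-t)/2) ^ (-q) * (1+‖y‖) ^ (-q) := Real.mul_rpow (by linarith) (by positivity)
  -- set decomposition
  set P : Set (E N) := {y : E N | t ≤ y 0} with hPdef
  set M : Set (E N) := {y : E N | y 0 < t} with hMdef
  have hMmeas : MeasurableSet M := measurableSet_lt hcont0.measurable measurable_const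
  have hPmeas : MeasurableSet P := measurableSet_le measurable_const hcont0.measurable
  set S' : Set (E N) := T ⁻¹' (A ∩ M) with hS'def
  have hS'meas : MeasurableSet S' := hTmp.measurable (hA.inter hMmeas)
  have hS'sub : S' ⊆ A ∩ P := by
    intro y hy
    obtain ⟨hyA, hyM⟩ := hy
    have hyM' : T y 0 < t := hyM
    rw [hT0] at hyM'
    have hy0 : t < y 0 := by linarith
    have hTA : 1 ≤ ‖T y‖ := (hmemA _).1 hyA
    refine ⟨?_, le_of_lt hy0⟩
    rw [hmemA]
    have hsq := hTsq y
    have ha : (1:ℝ) ≤ ‖T y‖^2 := by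
      rw [sq]
      simpa using mul_le_mul hTA hTA zero_le_one (norm_nonneg (T y))
    have hmm : (0:ℝ) ≤ 4*t*(y 0 - t) :=
      mul_nonneg (by linarith) (by linarith)
    have hb : (1:ℝ) ≤ ‖y‖^2 := by rw [hsq] at ha; linarith
    calc (1:ℝ) = Real.sqrt 1 := Real.sqrt_one.symm
      _ ≤ Real.sqrt (‖y‖^2) := Real.sqrt_le_sqrt hb
      _ = ‖y‖ := Real.sqrt_sq (norm_nonneg y)
  have hsplit : A = (A ∩ P) ∪ (A ∩ M) := by
    ext y
    constructor
    · intro hy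
      rcases le_or_gt t (y 0) with h|h
      · exact Or.inl ⟨hy, h⟩
      · exact Or.inr ⟨hy, h⟩
    · rintro (⟨h,-⟩|⟨h,-⟩) <;> exact h
  have hdisj : Disjoint (A ∩ P) (A ∩ M) := by
    rw [Set.disjoint_left]
    rintro y ⟨-, h1⟩ ⟨-, h2⟩
    have h1' : t ≤ y 0 := h1
    have h2' : y 0 < t := h2
    linarith
  have hIntP : IntegrableOn f (A ∩ P) := hInt.mono_set Set.inter_subset_left
  have hIntM : IntegrableOn f (A ∩ M) := hInt.mono_set Set.inter_subset_left
  have hIntS' : IntegrableOn f S' := hInt.mono_set (hS'sub.trans Set.inter_subset_left)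
  have e1 : ∫ y in A, f y = (∫ y in A ∩ P, f y) + ∫ y in A ∩ M, f y := by
    conv_lhs => rw [hsplit]
    exact setIntegral_union hdisj (hA.inter hMmeas) hIntP hIntM
  have e2 : ∫ y in A ∩ M, f y = - ∫ y in S', f y := by
    have h := hTmp.setIntegral_preimage_emb hTemb f (A ∩ M)
    rw [← h]
    simp only [hfT]
    rw [integral_neg]
  set D : Set (E N) := (A ∩ P) \ S' with hDdef
  have hDmeas : MeasurableSet D := (hA.inter hPmeas).diff hS'meas
  have hIntD : IntegrableOn f D := hIntP.mono_set Set.diff_subset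
  have e3 : ∫ y in A ∩ P, f y = (∫ y in S', f y) + ∫ y in D, f y := by
    conv_lhs => rw [← Set.union_diff_cancel hS'sub]
    exact setIntegral_union Set.disjoint_sdiff_right hDmeas hIntS' hIntD
  have hfnn : 0 ≤ᵐ[volume.restrict D] f := by
    show ∀ᵐ y ∂volume.restrict D, (0 : E N → ℝ) y ≤ f y
    simp only [Pi.zero_apply]
    rw [ae_restrict_iff' hDmeas]
    refine ae_of_all _ ?_
    intro y hy
    obtain ⟨⟨hyA, hyP⟩, -⟩ := hy
    have hyP' : t ≤ y 0 := hyP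
    rw [hfdef]
    exact mul_nonneg (by linarith) (Real.rpow_nonneg (norm_nonneg _) _)
  have hpos : 0 < ∫ y in D, f y := by
    rw [setIntegral_pos_iff_support_of_nonneg_ae hfnn hIntD]
    set U : Set (E N) := {y : E N | 1 < y 0} ∩ T ⁻¹' (Metric.ball (0 : E N) 1) with hUdef
    have hUopen : IsOpen U :=
      (isOpen_lt continuous_const hcont0).inter (Metric.isOpen_ball.preimage hTcont)
    have hUsub : U ⊆ Function.support f ∩ D := by
      intro y hy
      obtain ⟨hy1, hy2⟩ := hy
      have hy1' : 1 < y 0 := hy1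
      have hyA : y ∈ A := by
        rw [hmemA]
        have h := coord_le_norm N y 0
        have h' := le_abs_self (y 0)
        linarith
      have hyP : t ≤ y 0 := by linarith
      have hyS' : y ∉ S' := by
        intro h
        obtain ⟨hTA, -⟩ := h
        exact hTA hy2
      have h1 : (1:ℝ) ≤ ‖y‖ := (hmemA y).1 hyA
      have h2 : 0 < ‖y - c‖ := by
        have h := norm_sub_norm_le y c
        rw [hnc] at h; linarith
      refine ⟨?_, ⟨hyA, hyP⟩, hyS'⟩
      apply ne_of_gt
      rw [hfdef]
      exact mul_pos (by linarith) (Real.rpow_pos_of_pos h2 _)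
    have hUnon : U.Nonempty := by
      set X : E N := EuclideanSpace.single (0 : Fin (N+2)) (1:ℝ) with hXdef
      refine ⟨(1 + t) • X, ?_, ?_⟩
      · show (1:ℝ) < ((1 + t) • X) 0
        rw [PiLp.smul_apply, hXdef, EuclideanSpace.single_apply, smul_eq_mul]
        norm_num
        linarith
      · show T ((1 + t) • X) ∈ Metric.ball (0 : E N) 1
        have hsub : (1 + t) • X - c = X := by
          have h1t : (1 + t) - t = 1 := by ring
          rw [hcdef, ← sub_smul, h1t, one_smul]
        have hTy : T ((1 + t) • X) = (t - 1) • X := by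
          show c + L N ((1 + t) • X - c) = (t - 1) • X
          rw [hsub, hXdef, L_single, ← hXdef, hcdef]
          rw [sub_smul, one_smul, sub_eq_add_neg]
        rw [hTy, mem_ball_zero_iff, norm_smul, hXdef, EuclideanSpace.norm_single, norm_one]
        rw [Real.norm_eq_abs, abs_of_neg (by linarith)]
        linarith
    calc (0:ENNReal) < volume U := hUopen.measure_pos volume hUnon
      _ ≤ volume (Function.support f ∩ D) := measure_mono hUsub
  linarith [e1, e2, e3, hpos]
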